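/- Inverse relation for the φ- and φ'-exponentials: for z ∈ ℂ, if the series defining exp_{s,t}(z,φ) and exp_{s,t}(−z,φ') converge absolutely, then exp_{s,t}(z,φ)·exp_{s,t}(−z,φ') = 1. -/

import Mathlib

open scoped BigOperators

noncomputable section

/-- The Lucas sequence `{n}_{s,t}`. -/
def lucasSeq (s t : ℂ) : ℕ → ℂ
  | 0 => 0
  | 1 => 1
  | n + 2 => s * lucasSeq s t (n + 1) + t * lucasSeq s t n

/-- The Lucastorial `{n}_{s,t}!`. -/
def lucasFact (s t : ℂ) : ℕ → ℂ
  | 0 => 1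
  | n + 1 => lucasFact s t n * lucasSeq s t (n + 1)

/-- The Lucasnomial coefficient `{n choose k}_{s,t}`. -/
def lucasBinom (s t : ℂ) (n k : ℕ) : ℂ :=
  lucasFact s t n / (lucasFact s t k * lucasFact s t (n - k))

/-- The `(u,v)`-deformed Lucasnomial power `(x ⊕_{u,v} y)^{(n)}`. -/
def lucasPow (s t u v x y : ℂ) (n : ℕ) : ℂ :=
  ∑ k ∈ Finset.range (n + 1),
    lucasBinom s t n k * u ^ ((n - k).choose 2) * v ^ (k.choose 2) * x ^ (n - k) * y ^ k

/-- The Lucas-derivative with respect to the roots `p = φ`, `q = φ'`. -/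
def lucasDeriv (p q : ℂ) (f : ℂ → ℂ) (x : ℂ) : ℂ :=
  (f (p * x) - f (q * x)) / ((p - q) * x)

/-- The Lucas-derivative, extended by `0` at `0`, as an operator suitable for iteration. -/
def lucasDeriv0 (p q : ℂ) (f : ℂ → ℂ) : ℂ → ℂ :=
  fun x => if x = 0 then 0 else (f (p * x) - f (q * x)) / ((p - q) * x)

/-- The Lucas-Pantograph exponential `exp_{s,t}(z,u)`. -/
def lucasExp (s t u z : ℂ) : ℂ :=
  ∑' n : ℕ, u ^ (n.choose 2) * z ^ n / lucasFact s t n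

/-- The Lucas-Pantograph sine `sin_{s,t}(z,u)`. -/
def lucasSin (s t u z : ℂ) : ℂ :=
  ∑' n : ℕ, (-1 : ℂ) ^ n * u ^ ((2 * n + 1).choose 2) * z ^ (2 * n + 1) / lucasFact s t (2 * n + 1)

/-- The Lucas-Pantograph cosine `cos_{s,t}(z,u)`. -/
def lucasCos (s t u z : ℂ) : ℂ :=
  ∑' n : ℕ, (-1 : ℂ) ^ n * u ^ ((2 * n).choose 2) * z ^ (2 * n) / lucasFact s t (2 * n)

/-! Multiplying the `n`-th Cauchy coefficient `∑_{k+m=n} φ^{C(k,2)} (-1)^m φ'^{C(m,2)} / ({k}! {m}!)`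
by `{n} = φ'^m {k} + φ^k {m}` and using `{k} · u^{C(k,2)}/{k}! = u^{k-1} · u^{C(k-1,2)}/{k-1}!`
splits it into two sums over the antidiagonal of `n - 1` that cancel term by term.
So every coefficient but the constant one vanishes. -/

open Finset.HasAntidiagonal

section Lucas

variable {s t p q : ℂ}

theorem lucasSeq_eq_div_sub (hsum : p + q = s) (hprod : p * q = -t) (hpq : p ≠ q) (n : ℕ) :
    lucasSeq s t n = (p ^ n - q ^ n) / (p - q) := by
  have hpq' : p - q ≠ 0 := sub_ne_zero.mpr hpq
  obtain rfl := hsum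
  obtain rfl : t = -(p * q) := by rw [hprod, neg_neg]
  induction n using Nat.twoStepInduction with
  | zero => simp [lucasSeq]
  | one => simp [lucasSeq, hpq']
  | more n ih₁ ih₂ =>
    rw [lucasSeq, ih₁, ih₂]
    field_simp
    ring

theorem lucasSeq_add (hsum : p + q = s) (hprod : p * q = -t) (hpq : p ≠ q) (i j : ℕ) :
    lucasSeq s t (i + j) = q ^ j * lucasSeq s t i + p ^ i * lucasSeq s t j := by
  simp only [lucasSeq_eq_div_sub hsum hprod hpq]
  have hpq' : p - q ≠ 0 := sub_ne_zero.mpr hpq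
  field_simp
  ring

theorem lucasFact_ne_zero (hL : ∀ n : ℕ, 1 ≤ n → lucasSeq s t n ≠ 0) (n : ℕ) :
    lucasFact s t n ≠ 0 := by
  induction n with
  | zero => simp [lucasFact]
  | succ n ih => exact mul_ne_zero ih (hL (n + 1) n.succ_pos)

theorem lucasSeq_succ_mul_pow_choose_div_lucasFact
    (hL : ∀ n : ℕ, 1 ≤ n → lucasSeq s t n ≠ 0) (u : ℂ) (k : ℕ) :
    lucasSeq s t (k + 1) * (u ^ (k + 1).choose 2 / lucasFact s t (k + 1)) =
      u ^ k * (u ^ k.choose 2 / lucasFact s t k) := by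
  have hF := lucasFact_ne_zero hL k
  have hLk := hL (k + 1) k.succ_pos
  rw [lucasFact, Nat.choose_succ_succ', Nat.choose_one_right]
  field_simp
  ring

theorem sum_antidiagonal_lucas_eq_zero (hsum : p + q = s) (hprod : p * q = -t)
    (hpq : p ≠ q) (hL : ∀ n : ℕ, 1 ≤ n → lucasSeq s t n ≠ 0) (n : ℕ) :
    ∑ km ∈ antidiagonal (n + 1),
      p ^ km.1.choose 2 / lucasFact s t km.1 *
        ((-1) ^ km.2 * (q ^ km.2.choose 2 / lucasFact s t km.2)) = 0 := by
  set a : ℕ → ℂ := fun k => p ^ k.choose 2 / lucasFact s t k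
  set b : ℕ → ℂ := fun m => (-1) ^ m * (q ^ m.choose 2 / lucasFact s t m)
  have ha (k : ℕ) : lucasSeq s t (k + 1) * a (k + 1) = p ^ k * a k :=
    lucasSeq_succ_mul_pow_choose_div_lucasFact hL p k
  have hb (m : ℕ) : lucasSeq s t (m + 1) * b (m + 1) = -(q ^ m * b m) := by
    simp only [b]
    linear_combination -(-1) ^ m * lucasSeq_succ_mul_pow_choose_div_lucasFact hL q m
  have hL0 : lucasSeq s t 0 = 0 := rfl
  have hsplit : lucasSeq s t (n + 1) * ∑ km ∈ antidiagonal (n + 1), a km.1 * b km.2 =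
      (∑ km ∈ antidiagonal (n + 1), q ^ km.2 * (lucasSeq s t km.1 * a km.1) * b km.2) +
        ∑ km ∈ antidiagonal (n + 1), p ^ km.1 * a km.1 * (lucasSeq s t km.2 * b km.2) := by
    rw [Finset.mul_sum, ← Finset.sum_add_distrib]
    refine Finset.sum_congr rfl fun km hkm => ?_
    rw [← mem_antidiagonal.mp hkm, lucasSeq_add hsum hprod hpq]
    ring
  have hcancel : lucasSeq s t (n + 1) * ∑ km ∈ antidiagonal (n + 1), a km.1 * b km.2 = 0 := by
    rw [hsplit, Finset.Nat.sum_antidiagonal_succ, Finset.Nat.sum_antidiagonal_succ']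
    simp only [hL0, ha, hb, zero_mul, mul_zero, zero_add, ← Finset.sum_add_distrib]
    exact Finset.sum_eq_zero fun _ _ => by ring
  exact (mul_eq_zero.mp hcancel).resolve_left (hL (n + 1) n.succ_pos)

end Lucas

theorem lucasExp_phi_mul_inv_general (s t : ℂ)
    (hst : s ^ 2 + 4 * t ≠ 0) (hL : ∀ n : ℕ, 1 ≤ n → lucasSeq s t n ≠ 0)
    (d : ℂ) (hd : d ^ 2 = s ^ 2 + 4 * t) (z : ℂ)
    (hconv1 : Summable fun n : ℕ =>
      ‖((s + d) / 2) ^ (n.choose 2) * z ^ n / lucasFact s t n‖)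
    (hconv2 : Summable fun n : ℕ =>
      ‖((s - d) / 2) ^ (n.choose 2) * (-z) ^ n / lucasFact s t n‖) :
    lucasExp s t ((s + d) / 2) z * lucasExp s t ((s - d) / 2) (-z) = 1 := by
  have hsum : (s + d) / 2 + (s - d) / 2 = s := by ring
  have hprod : (s + d) / 2 * ((s - d) / 2) = -t := by linear_combination -hd / 4
  have hpq : (s + d) / 2 ≠ (s - d) / 2 := fun h => hst (by rw [← hd]; linear_combination d * h)
  have hcoeff (n : ℕ) : ∑ km ∈ antidiagonal n,
      ((s + d) / 2) ^ km.1.choose 2 * z ^ km.1 / lucasFact s t km.1 *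
        (((s - d) / 2) ^ km.2.choose 2 * (-z) ^ km.2 / lucasFact s t km.2) =
      if n = 0 then 1 else 0 := by
    cases n with
    | zero => simp [lucasFact]
    | succ n =>
      rw [if_neg n.succ_ne_zero, ← mul_zero (z ^ (n + 1)),
        ← sum_antidiagonal_lucas_eq_zero hsum hprod hpq hL n, Finset.mul_sum]
      refine Finset.sum_congr rfl fun km hkm => ?_
      rw [← mem_antidiagonal.mp hkm, neg_pow, pow_add]
      ring
  rw [lucasExp, lucasExp, tsum_mul_tsum_eq_tsum_sum_antidiagonal_of_summable_norm hconv1 hconv2,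
    tsum_congr hcoeff, tsum_ite_eq]

/-- Inverse relation for the `φ`- and `φ'`-exponentials, where `φ = (s+d)/2`, `φ' = (s-d)/2`
with `d` a square root of `s²+4t ≠ 0`. -/
theorem lucasExp_phi_mul_inv (s t : ℂ) (hs : s ≠ 0) (ht : t ≠ 0)
    (hst : s ^ 2 + 4 * t ≠ 0) (hL : ∀ n : ℕ, 1 ≤ n → lucasSeq s t n ≠ 0)
    (d : ℂ) (hd : d ^ 2 = s ^ 2 + 4 * t) (z : ℂ)
    (hconv1 : Summable fun n : ℕ =>
      ‖((s + d) / 2) ^ (n.choose 2) * z ^ n / lucasFact s t n‖)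
    (hconv2 : Summable fun n : ℕ =>
      ‖((s - d) / 2) ^ (n.choose 2) * (-z) ^ n / lucasFact s t n‖) :
    lucasExp s t ((s + d) / 2) z * lucasExp s t ((s - d) / 2) (-z) = 1 :=
  lucasExp_phi_mul_inv_general s t hst hL d hd z hconv1 hconv2
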